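/- arXiv:cond-mat/0702059 — 3 statements merged into one kernel-verified Lean document; each statement's English description precedes it below -/
import Mathlib

section
/- (Kitaev's Lemma.) Let A₁ and A₂ be positive semi-definite Hermitian operators on a finite-dimensional complex Hilbert space, let G₁ = ker A₁ and G₂ = ker A₂, and let Π₁, Π₂ be the orthogonal projections onto G₁ and G₂. Assume G₁ ∩ G₂ = {0} and that A_i ≥ δ(1 − Π_i) for some δ > 0 and i = 1,2. Then A₁ + A₂ ≥ δ(1 − ε)·1, where ε = sup{|⟨ψ₁, ψ₂⟩| : ψ₁ ∈ G₁, ψ₂ ∈ G₂, ‖ψ₁‖ = ‖ψ₂‖ = 1} (with ε = 0 if G₁ or G₂ is {0}). -/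
/-!
Write `u = Π₁ ψ`, `v = Π₂ ψ` and `s = ‖u‖² + ‖v‖²`. By Pythagoras the gap hypotheses give
`⟪ψ, (A₁ + A₂) ψ⟫ ≥ δ (2‖ψ‖² - s)`, so it suffices to show `s ≤ (1 + ε) ‖ψ‖²`. Now
`s = re ⟪ψ, u + v⟫ ≤ ‖ψ‖ ‖u + v‖`, while `|⟪u, v⟫| ≤ ε ‖u‖ ‖v‖` and AM-GM give
`‖u + v‖² ≤ (1 + ε) s`; together `s² ≤ (1 + ε) s ‖ψ‖²`.
-/

open scoped ComplexInnerProductSpace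

noncomputable section

open scoped InnerProductSpace
open RCLike

namespace Submodule

variable {𝕜 E : Type*} [RCLike 𝕜] [NormedAddCommGroup E] [InnerProductSpace 𝕜 E]

/-- The cosine of the (Dixmier) angle between `K₁` and `K₂`; the junk value `sSup ∅ = 0` is the
paper's convention `ε = 0` when one of them is trivial. -/
def maxOverlap (K₁ K₂ : Submodule 𝕜 E) : ℝ :=
  sSup {r : ℝ | ∃ ψ₁ ∈ K₁, ∃ ψ₂ ∈ K₂, ‖ψ₁‖ = 1 ∧ ‖ψ₂‖ = 1 ∧ r = ‖⟪ψ₁, ψ₂⟫_𝕜‖}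

variable {K₁ K₂ : Submodule 𝕜 E}

lemma maxOverlap_nonneg : 0 ≤ maxOverlap K₁ K₂ :=
  Real.sSup_nonneg <| by
    rintro r ⟨ψ₁, -, ψ₂, -, -, -, rfl⟩
    exact norm_nonneg _

lemma norm_inner_le_maxOverlap {ψ₁ ψ₂ : E} (h₁ : ψ₁ ∈ K₁) (h₂ : ψ₂ ∈ K₂) (hn₁ : ‖ψ₁‖ = 1)
    (hn₂ : ‖ψ₂‖ = 1) : ‖⟪ψ₁, ψ₂⟫_𝕜‖ ≤ maxOverlap K₁ K₂ := by
  refine le_csSup ⟨1, ?_⟩ ⟨ψ₁, h₁, ψ₂, h₂, hn₁, hn₂, rfl⟩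
  rintro r ⟨φ₁, -, φ₂, -, hφ₁, hφ₂, rfl⟩
  simpa [hφ₁, hφ₂] using norm_inner_le_norm (𝕜 := 𝕜) φ₁ φ₂

lemma norm_inner_le_maxOverlap_mul {u v : E} (hu : u ∈ K₁) (hv : v ∈ K₂) :
    ‖⟪u, v⟫_𝕜‖ ≤ maxOverlap K₁ K₂ * (‖u‖ * ‖v‖) := by
  rcases eq_or_ne u 0 with rfl | hu₀
  · simp
  rcases eq_or_ne v 0 with rfl | hv₀
  · simp
  have hunit := norm_inner_le_maxOverlap (K₁.smul_mem (‖u‖⁻¹ : 𝕜) hu) (K₂.smul_mem (‖v‖⁻¹ : 𝕜) hv)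
    (norm_smul_inv_norm hu₀) (norm_smul_inv_norm hv₀)
  rw [inner_smul_left, inner_smul_right, norm_mul, norm_mul, norm_conj, norm_inv, norm_inv,
    norm_ofReal, norm_ofReal, abs_norm, abs_norm, ← mul_assoc, ← mul_inv,
    inv_mul_le_iff₀ (by positivity)] at hunit
  linarith

lemma norm_add_sq_le_of_norm_inner_le {u v : E} {c : ℝ} (hc : 0 ≤ c)
    (h : ‖⟪u, v⟫_𝕜‖ ≤ c * (‖u‖ * ‖v‖)) : ‖u + v‖ ^ 2 ≤ (1 + c) * (‖u‖ ^ 2 + ‖v‖ ^ 2) := by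
  have hre : re ⟪u, v⟫_𝕜 ≤ c * (‖u‖ * ‖v‖) := (re_le_norm _).trans h
  have hamgm : 2 * ‖u‖ * ‖v‖ ≤ ‖u‖ ^ 2 + ‖v‖ ^ 2 := two_mul_le_add_sq _ _
  rw [norm_add_sq (𝕜 := 𝕜)]
  nlinarith

lemma norm_sub_starProjection_sq (K : Submodule 𝕜 E) [K.HasOrthogonalProjection] (ψ : E) :
    ‖ψ - K.starProjection ψ‖ ^ 2 = ‖ψ‖ ^ 2 - ‖K.starProjection ψ‖ ^ 2 := by
  rw [K.norm_sq_eq_add_norm_sq_starProjection ψ, starProjection_orthogonal_val]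
  ring

lemma re_inner_starProjection_eq_norm_sq (K : Submodule 𝕜 E) [K.HasOrthogonalProjection]
    (ψ : E) : re ⟪ψ, K.starProjection ψ⟫_𝕜 = ‖K.starProjection ψ‖ ^ 2 := by
  rw [inner_re_symm, K.re_inner_starProjection_eq_normSq]
  rfl

lemma norm_sq_starProjection_add_norm_sq_starProjection_le [K₁.HasOrthogonalProjection]
    [K₂.HasOrthogonalProjection] (ψ : E) :
    ‖K₁.starProjection ψ‖ ^ 2 + ‖K₂.starProjection ψ‖ ^ 2 ≤
      (1 + maxOverlap K₁ K₂) * ‖ψ‖ ^ 2 := by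
  set u := K₁.starProjection ψ
  set v := K₂.starProjection ψ
  set s := ‖u‖ ^ 2 + ‖v‖ ^ 2
  have hs : s ≤ ‖ψ‖ * ‖u + v‖ := by
    calc s = re ⟪ψ, u + v⟫_𝕜 := by
          rw [inner_add_right, map_add, re_inner_starProjection_eq_norm_sq,
            re_inner_starProjection_eq_norm_sq]
      _ ≤ ‖ψ‖ * ‖u + v‖ := re_inner_le_norm _ _
  have huv : ‖u + v‖ ^ 2 ≤ (1 + maxOverlap K₁ K₂) * s :=
    norm_add_sq_le_of_norm_inner_le maxOverlap_nonneg <|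
      norm_inner_le_maxOverlap_mul (K₁.starProjection_apply_mem ψ) (K₂.starProjection_apply_mem ψ)
  have hsq : s * s ≤ s * ((1 + maxOverlap K₁ K₂) * ‖ψ‖ ^ 2) :=
    calc s * s ≤ (‖ψ‖ * ‖u + v‖) * (‖ψ‖ * ‖u + v‖) := mul_self_le_mul_self (by positivity) hs
      _ = ‖u + v‖ ^ 2 * ‖ψ‖ ^ 2 := by ring
      _ ≤ (1 + maxOverlap K₁ K₂) * s * ‖ψ‖ ^ 2 := by gcongr
      _ = s * ((1 + maxOverlap K₁ K₂) * ‖ψ‖ ^ 2) := by ring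
  rcases (show 0 ≤ s by positivity).eq_or_lt with hs₀ | hs₀
  · rw [← hs₀]
    have : 0 ≤ maxOverlap K₁ K₂ := maxOverlap_nonneg
    positivity
  · exact le_of_mul_le_mul_left hsq hs₀

end Submodule

theorem kitaev_lemma_general
    {E : Type*} [NormedAddCommGroup E] [InnerProductSpace ℂ E] [FiniteDimensional ℂ E]
    (A₁ A₂ : E →ₗ[ℂ] E)
    (δ : ℝ) (hδ : 0 < δ)
    (hgap₁ : ∀ ψ : E,
      δ * ‖ψ - (Submodule.orthogonalProjection (LinearMap.ker A₁) ψ : E)‖ ^ 2 ≤ (⟪ψ, A₁ ψ⟫).re)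
    (hgap₂ : ∀ ψ : E,
      δ * ‖ψ - (Submodule.orthogonalProjection (LinearMap.ker A₂) ψ : E)‖ ^ 2 ≤ (⟪ψ, A₂ ψ⟫).re)
    (ε : ℝ)
    (hε : ε = sSup {r : ℝ | ∃ ψ₁ ∈ LinearMap.ker A₁, ∃ ψ₂ ∈ LinearMap.ker A₂,
        ‖ψ₁‖ = 1 ∧ ‖ψ₂‖ = 1 ∧ r = ‖⟪ψ₁, ψ₂⟫‖}) :
    ∀ ψ : E, δ * (1 - ε) * ‖ψ‖ ^ 2 ≤ (⟪ψ, (A₁ + A₂) ψ⟫).re := by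
  intro ψ
  rw [show ε = Submodule.maxOverlap (LinearMap.ker A₁) (LinearMap.ker A₂) from hε]
  have h₁ := hgap₁ ψ
  have h₂ := hgap₂ ψ
  rw [← Submodule.starProjection_apply, Submodule.norm_sub_starProjection_sq] at h₁ h₂
  have hcap := Submodule.norm_sq_starProjection_add_norm_sq_starProjection_le
    (K₁ := LinearMap.ker A₁) (K₂ := LinearMap.ker A₂) ψ
  rw [LinearMap.add_apply, inner_add_right, Complex.add_re]
  linarith [mul_le_mul_of_nonneg_left hcap hδ.le]

/-- Kitaev's Lemma: if `A₁, A₂` are positive semi-definite Hermitian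
operators on a finite-dimensional complex Hilbert space with kernels `G₁, G₂`
satisfying `G₁ ∩ G₂ = {0}` and `A_i ≥ δ(1 − Π_i)` (`Π_i` the orthogonal projection
onto `G_i`), then `A₁ + A₂ ≥ δ(1 − ε)·1`, where
`ε = sup{|⟨ψ₁, ψ₂⟩| : ψ_i ∈ G_i, ‖ψ_i‖ = 1}`. -/
theorem kitaev_lemma
    {E : Type*} [NormedAddCommGroup E] [InnerProductSpace ℂ E] [FiniteDimensional ℂ E]
    (A₁ A₂ : E →ₗ[ℂ] E)
    (hsym₁ : A₁.IsSymmetric) (hsym₂ : A₂.IsSymmetric)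
    (hpos₁ : ∀ ψ : E, 0 ≤ (⟪ψ, A₁ ψ⟫).re) (hpos₂ : ∀ ψ : E, 0 ≤ (⟪ψ, A₂ ψ⟫).re)
    (hdisj : LinearMap.ker A₁ ⊓ LinearMap.ker A₂ = ⊥)
    (δ : ℝ) (hδ : 0 < δ)
    (hgap₁ : ∀ ψ : E,
      δ * ‖ψ - (Submodule.orthogonalProjection (LinearMap.ker A₁) ψ : E)‖ ^ 2 ≤ (⟪ψ, A₁ ψ⟫).re)
    (hgap₂ : ∀ ψ : E,
      δ * ‖ψ - (Submodule.orthogonalProjection (LinearMap.ker A₂) ψ : E)‖ ^ 2 ≤ (⟪ψ, A₂ ψ⟫).re)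
    (ε : ℝ)
    (hε : ε = sSup {r : ℝ | ∃ ψ₁ ∈ LinearMap.ker A₁, ∃ ψ₂ ∈ LinearMap.ker A₂,
        ‖ψ₁‖ = 1 ∧ ‖ψ₂‖ = 1 ∧ r = ‖⟪ψ₁, ψ₂⟫‖}) :
    ∀ ψ : E, δ * (1 - ε) * ‖ψ‖ ^ 2 ≤ (⟪ψ, (A₁ + A₂) ψ⟫).re :=
  kitaev_lemma_general A₁ A₂ δ hδ hgap₁ hgap₂ ε hε
end
end

section
/- For every c ∈ ℂ∖{0} and every x ∈ [1,L−1], the kink state satisfies h_{x,x+1} φ_c = 0. Consequently H_0 φ_c = 0, and since H_0 ≥ 0, the lowest eigenvalue of H_0 is 0 and φ_c is a ground state of H_0. -/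
open Matrix Finset
open scoped ComplexOrder

noncomputable section

/-- Configuration space of a chain of `L` spins-1/2: `ℋ_L = ⊗_{x=1}^L ℂ²`
is identified with functions `Conf L → ℂ`. -/
abbrev Conf (L : ℕ) := Fin L → Fin 2

def S1 : Matrix (Fin 2) (Fin 2) ℂ := !![0, 1/2; 1/2, 0]
def S2 : Matrix (Fin 2) (Fin 2) ℂ := !![0, -Complex.I/2; Complex.I/2, 0]
def S3 : Matrix (Fin 2) (Fin 2) ℂ := !![1/2, 0; 0, -1/2]

/-- The one-site operator `A` acting on the `x`-th (0-based) tensor factor of `ℋ_L`. -/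
def siteOp (L : ℕ) (A : Matrix (Fin 2) (Fin 2) ℂ) (x : ℕ) :
    Matrix (Conf L) (Conf L) ℂ :=
  fun m n =>
    if hx : x < L then
      A (m ⟨x, hx⟩) (n ⟨x, hx⟩) *
        ∏ y ∈ Finset.univ.erase (⟨x, hx⟩ : Fin L), (if m y = n y then 1 else 0)
    else 0

def q (Δ : ℝ) : ℝ := Δ - Real.sqrt (Δ ^ 2 - 1)

/-- The bond interaction `h_{x,x+1}` (with `x` 0-based). -/
def hBond (L : ℕ) (Δ : ℝ) (x : ℕ) : Matrix (Conf L) (Conf L) ℂ :=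
  (-(Δ⁻¹ : ℝ) : ℂ) • (siteOp L S1 x * siteOp L S1 (x + 1) + siteOp L S2 x * siteOp L S2 (x + 1))
    - siteOp L S3 x * siteOp L S3 (x + 1)
    + ((1 / 2 * Real.sqrt (1 - Δ⁻¹ ^ 2) : ℝ) : ℂ) • (siteOp L S3 x - siteOp L S3 (x + 1))
    + ((1 / 4 : ℝ) : ℂ) • 1

/-- The XXZ kink Hamiltonian `H_0 = ∑_{x=1}^{L-1} h_{x,x+1}`. -/
def H0 (L : ℕ) (Δ : ℝ) : Matrix (Conf L) (Conf L) ℂ :=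
  ∑ x ∈ Finset.range (L - 1), hBond L Δ x

/-- The kink state `φ_c` (0-based site `x` corresponds to the paper's site `x+1`). -/
def kink (L : ℕ) (Δ : ℝ) (c : ℂ) : Conf L → ℂ :=
  fun m => ∏ x : Fin L,
    (((1 + ‖c‖ ^ 2 * q Δ ^ (2 * (x.1 + 1))) ^ (-(1 / 2 : ℝ)) : ℝ) : ℂ) *
      (if m x = 0 then 1 else c * (q Δ : ℂ) ^ (x.1 + 1))

/-- The set of (real) eigenvalues of a matrix. -/
def eigSet {n : Type*} [Fintype n] [DecidableEq n] (H : Matrix n n ℂ) : Set ℝ :=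
  {μ : ℝ | ∃ ψ : n → ℂ, ψ ≠ 0 ∧ H.mulVec ψ = (μ : ℂ) • ψ}

/-- Euclidean norm of `𝐁(x) ∈ ℝ³`. -/
def bnorm (b : Fin 3 → ℝ) : ℝ := Real.sqrt (b 0 ^ 2 + b 1 ^ 2 + b 2 ^ 2)

/-- The magnetic field term `𝐁(x)·𝐒_x` at (0-based) site `x`. -/
def fieldOp (L : ℕ) (b : Fin 3 → ℝ) (x : ℕ) : Matrix (Conf L) (Conf L) ℂ :=
  (b 0 : ℂ) • siteOp L S1 x + (b 1 : ℂ) • siteOp L S2 x + (b 2 : ℂ) • siteOp L S3 x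

/-! Each bond term `h_{x,x+1}` is `(1 + q²)⁻¹ |ψ⟩⟨ψ|` on sites `x, x+1`, tensored with the identity
elsewhere, where `ψ = |↑↓⟩ - q |↓↑⟩` is the `q`-deformed singlet; this rests on `q² + 1 = 2Δq`. On those two sites the kink state is proportional to
`(1, c q^x) ⊗ (1, c q^{x+1})`, which is orthogonal to `ψ`, so every bond annihilates `φ_c`.
Every bond term is positive semidefinite, hence so is `H_0`, and a positive semidefinite matrix has
no negative eigenvalue. -/

open scoped Kronecker

theorem kronecker_mulVec_tensor {R l m n p : Type*} [CommSemiring R] [Fintype m] [Fintype p]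
    (A : Matrix l m R) (B : Matrix n p R) (u : m → R) (v : p → R) :
    (A ⊗ₖ B) *ᵥ (fun x => u x.1 * v x.2) = fun x => (A *ᵥ u) x.1 * (B *ᵥ v) x.2 := by
  ext ⟨x, y⟩
  simp only [mulVec, dotProduct, Fintype.sum_prod_type, kronecker_apply, Finset.sum_mul_sum]
  exact Finset.sum_congr rfl fun _ _ => Finset.sum_congr rfl fun _ _ => by ring

theorem Matrix.PosSemidef.nonneg_of_mulVec_eq_smul {n 𝕜 : Type*} [Fintype n] [RCLike 𝕜]
    {A : Matrix n n 𝕜} (hA : A.PosSemidef) {ψ : n → 𝕜} (hψ : ψ ≠ 0) {μ : ℝ}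
    (hμ : A *ᵥ ψ = (μ : 𝕜) • ψ) : 0 ≤ μ := by
  have h := hA.dotProduct_mulVec_nonneg ψ
  rw [hμ, dotProduct_smul, smul_eq_mul] at h
  obtain ⟨t, ht, hteq⟩ := RCLike.pos_iff_exists_ofReal.mp (dotProduct_star_self_pos_iff.mpr hψ)
  rw [← hteq, ← RCLike.ofReal_mul, RCLike.ofReal_nonneg] at h
  exact nonneg_of_mul_nonneg_left h ht

section BondOperator

variable {ι d : Type*} [Fintype ι] [DecidableEq ι]

theorem prod_eq_mul_mul_prod_compl_pair {M : Type*} [CommMonoid M] {i j : ι} (hij : i ≠ j)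
    (f : ι → M) : ∏ y, f y = f i * f j * ∏ y ∈ ({i, j}ᶜ : Finset ι), f y := by
  rw [← Finset.prod_mul_prod_compl {i, j}, Finset.prod_pair hij]

def bondSplit (i j : ι) (m : ι → d) : (d × d) × (({i, j}ᶜ : Finset ι) → d) :=
  ((m i, m j), fun y => m y)

def bondSplitEquiv {i j : ι} (hij : i ≠ j) :
    (ι → d) ≃ (d × d) × (({i, j}ᶜ : Finset ι) → d) where
  toFun := bondSplit i j
  invFun p y :=
    if hi : y = i then p.1.1 else if hj : y = j then p.1.2 else p.2 ⟨y, by simp [hi, hj]⟩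
  left_inv m := by
    funext y
    by_cases hi : y = i
    · simp [hi, bondSplit]
    by_cases hj : y = j
    · simp [hj, hij.symm, bondSplit]
    · simp [hi, hj, bondSplit]
  right_inv p := by
    ext y
    · simp [bondSplit]
    · simp [bondSplit, hij.symm]
    · obtain ⟨y, hy⟩ := y
      simp only [mem_compl, mem_insert, mem_singleton, not_or] at hy
      simp [bondSplit, hy.1, hy.2]

variable {R : Type*} [CommSemiring R] [DecidableEq d]

def bondOp (i j : ι) : Matrix (d × d) (d × d) R →ₗ[R] Matrix (ι → d) (ι → d) R where
  toFun B := (B ⊗ₖ (1 : Matrix (({i, j}ᶜ : Finset ι) → d) _ R)).submatrix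
    (bondSplit i j) (bondSplit i j)
  map_add' B C := by rw [add_kronecker]; rfl
  map_smul' r B := by rw [smul_kronecker]; rfl

lemma bondOp_apply (i j : ι) (B : Matrix (d × d) (d × d) R) (m n : ι → d) :
    bondOp i j B m n =
      B (m i, m j) (n i, n j) * ∏ y ∈ ({i, j}ᶜ : Finset ι), (1 : Matrix d d R) (m y) (n y) := by
  simp [bondOp, bondSplit, one_apply, Finset.prod_boole, funext_iff]

lemma bondOp_eq_submatrix {i j : ι} (hij : i ≠ j) (B : Matrix (d × d) (d × d) R) :
    bondOp i j B = (B ⊗ₖ (1 : Matrix (({i, j}ᶜ : Finset ι) → d) _ R)).submatrix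
      (bondSplitEquiv hij) (bondSplitEquiv hij) := rfl

lemma bondOp_one {i j : ι} (hij : i ≠ j) : bondOp i j (1 : Matrix (d × d) (d × d) R) = 1 := by
  rw [bondOp_eq_submatrix hij, one_kronecker_one, submatrix_one_equiv]

variable [Fintype d]

lemma bondOp_mul {i j : ι} (hij : i ≠ j) (B C : Matrix (d × d) (d × d) R) :
    bondOp i j (B * C) = bondOp i j B * bondOp i j C := by
  rw [bondOp_eq_submatrix hij, bondOp_eq_submatrix hij, bondOp_eq_submatrix hij,
    submatrix_mul_equiv, ← mul_kronecker_mul, mul_one]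

lemma bondOp_mulVec_prod_eq_zero {i j : ι} (hij : i ≠ j) {B : Matrix (d × d) (d × d) R}
    {f : ι → d → R} (hB : B *ᵥ (fun p => f i p.1 * f j p.2) = 0) :
    bondOp i j B *ᵥ (fun m => ∏ y, f y (m y)) = 0 := by
  set u : d × d → R := fun p => f i p.1 * f j p.2
  set g : (({i, j}ᶜ : Finset ι) → d) → R := fun r => ∏ y : ({i, j}ᶜ : Finset ι), f y (r y)
  have hsplit : (fun m => ∏ y, f y (m y)) = (fun p => u p.1 * g p.2) ∘ bondSplitEquiv hij := by
    funext m
    simp [u, g, bondSplitEquiv, bondSplit, prod_eq_mul_mul_prod_compl_pair hij]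
  rw [hsplit, bondOp_eq_submatrix hij, submatrix_mulVec_equiv, Function.comp_assoc,
    Equiv.self_comp_symm, Function.comp_id, kronecker_mulVec_tensor, hB]
  simp only [Pi.zero_apply, zero_mul]
  rfl

theorem posSemidef_bondOp {𝕜 : Type*} [RCLike 𝕜] {B : Matrix (d × d) (d × d) 𝕜}
    (hB : B.PosSemidef) (i j : ι) : (bondOp i j B).PosSemidef :=
  (hB.kronecker PosSemidef.one).submatrix _

end BondOperator

section Anisotropy

variable {Δ : ℝ}

lemma q_sq_add_one (hΔ : 1 ≤ Δ) : q Δ ^ 2 + 1 = 2 * Δ * q Δ := by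
  have := Real.sq_sqrt (show 0 ≤ Δ ^ 2 - 1 by nlinarith)
  unfold q
  linear_combination this

lemma q_pos (hΔ : 1 ≤ Δ) : 0 < q Δ := by
  have : Real.sqrt (Δ ^ 2 - 1) < Δ := by
    rw [Real.sqrt_lt' (by linarith)]; linarith
  unfold q; linarith

lemma sqrt_one_sub_inv_sq (hΔ : 0 < Δ) :
    Real.sqrt (1 - Δ⁻¹ ^ 2) = Real.sqrt (Δ ^ 2 - 1) / Δ := by
  rw [show 1 - Δ⁻¹ ^ 2 = (Δ ^ 2 - 1) / Δ ^ 2 by field_simp, Real.sqrt_div' _ (by positivity),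
    Real.sqrt_sq hΔ.le]

lemma inv_one_add_q_sq (hΔ : 1 ≤ Δ) :
    (1 + q Δ ^ 2)⁻¹ = (1 + Real.sqrt (1 - Δ⁻¹ ^ 2)) / 2 := by
  have hs := Real.sq_sqrt (show 0 ≤ Δ ^ 2 - 1 by nlinarith)
  have hq := q_pos hΔ
  rw [sqrt_one_sub_inv_sq (by linarith), add_comm 1, q_sq_add_one hΔ]
  field_simp
  unfold q
  linear_combination hs

lemma q_div_one_add_q_sq (hΔ : 1 ≤ Δ) : q Δ / (1 + q Δ ^ 2) = Δ⁻¹ / 2 := by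
  have := q_pos hΔ
  rw [add_comm 1, q_sq_add_one hΔ]
  field_simp

end Anisotropy

section KinkChain

variable {L : ℕ}

lemma compl_pair_eq_erase_erase (i j : Fin L) :
    ({i, j}ᶜ : Finset (Fin L)) = (univ.erase i).erase j := by
  ext y; simp [and_comm]

lemma siteOp_apply (A : Matrix (Fin 2) (Fin 2) ℂ) (i : Fin L) (m n : Conf L) :
    siteOp L A i m n =
      A (m i) (n i) * ∏ y ∈ univ.erase i, (1 : Matrix (Fin 2) (Fin 2) ℂ) (m y) (n y) := by
  simp [siteOp, one_apply]

lemma siteOp_eq_bondOp_left (A : Matrix (Fin 2) (Fin 2) ℂ) {i j : Fin L} (hij : i ≠ j) :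
    siteOp L A i = bondOp i j (A ⊗ₖ 1) := by
  ext m n
  rw [siteOp_apply, bondOp_apply, kronecker_apply,
    ← Finset.mul_prod_erase (univ.erase i) _ (by simpa using hij.symm), compl_pair_eq_erase_erase]
  ring

lemma siteOp_eq_bondOp_right (A : Matrix (Fin 2) (Fin 2) ℂ) {i j : Fin L} (hij : i ≠ j) :
    siteOp L A j = bondOp i j (1 ⊗ₖ A) := by
  ext m n
  rw [siteOp_apply, bondOp_apply, kronecker_apply,
    ← Finset.mul_prod_erase (univ.erase j) _ (by simpa using hij), Finset.pair_comm,
    compl_pair_eq_erase_erase]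
  ring

def bondHamiltonian (Δ : ℝ) : Matrix (Fin 2 × Fin 2) (Fin 2 × Fin 2) ℂ :=
  (-(Δ⁻¹ : ℝ) : ℂ) • (S1 ⊗ₖ S1 + S2 ⊗ₖ S2) - S3 ⊗ₖ S3
    + ((1 / 2 * Real.sqrt (1 - Δ⁻¹ ^ 2) : ℝ) : ℂ) • (S3 ⊗ₖ 1 - 1 ⊗ₖ S3)
    + ((1 / 4 : ℝ) : ℂ) • 1

lemma hBond_eq_bondOp (Δ : ℝ) {x : ℕ} (hx : x + 1 < L) :
    hBond L Δ x = bondOp ⟨x, by omega⟩ ⟨x + 1, hx⟩ (bondHamiltonian Δ) := by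
  set i : Fin L := ⟨x, by omega⟩
  set j : Fin L := ⟨x + 1, hx⟩
  have hij : i ≠ j := by simp [i, j, Fin.ext_iff]
  have hleft (A) : siteOp L A x = bondOp i j (A ⊗ₖ 1) := siteOp_eq_bondOp_left A hij
  have hright (A) : siteOp L A (x + 1) = bondOp i j (1 ⊗ₖ A) := siteOp_eq_bondOp_right A hij
  simp only [hBond, bondHamiltonian, hleft, hright, ← bondOp_mul hij, ← bondOp_one hij (R := ℂ),
    ← mul_kronecker_mul, one_mul, mul_one, map_add, map_sub, map_smul]

def qSinglet (Δ : ℝ) : Fin 2 × Fin 2 → ℂ := fun p => !![0, 1; -(q Δ : ℂ), 0] p.1 p.2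

lemma bondHamiltonian_eq_smul_vecMulVec {Δ : ℝ} (hΔ : 1 ≤ Δ) :
    bondHamiltonian Δ =
      (((1 + q Δ ^ 2)⁻¹ : ℝ) : ℂ) • vecMulVec (qSinglet Δ) (star (qSinglet Δ)) := by
  have h1 : (1 + (q Δ : ℂ) ^ 2)⁻¹ = (1 + (Real.sqrt (1 - (Δ ^ 2)⁻¹) : ℂ)) / 2 := by
    rw [← inv_pow]; exact_mod_cast inv_one_add_q_sq hΔ
  have h2 : (1 + (q Δ : ℂ) ^ 2)⁻¹ * q Δ = (Δ : ℂ)⁻¹ / 2 := by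
    rw [← div_eq_inv_mul]; exact_mod_cast q_div_one_add_q_sq hΔ
  have h3 : (1 + (q Δ : ℂ) ^ 2)⁻¹ * (1 + (q Δ : ℂ) ^ 2) = 1 :=
    inv_mul_cancel₀ (by exact_mod_cast (show 1 + q Δ ^ 2 ≠ 0 by positivity))
  ext ⟨a, b⟩ ⟨c, e⟩
  fin_cases a <;> fin_cases b <;> fin_cases c <;> fin_cases e <;>
    simp [bondHamiltonian, qSinglet, S1, S2, S3, vecMulVec] <;>
    first
      | ring1
      | linear_combination -h1
      | linear_combination h1 - h3
      | linear_combination (-(Δ : ℂ)⁻¹ / 4) * Complex.I_sq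
      | linear_combination ((Δ : ℂ)⁻¹ / 4) * Complex.I_sq + h2

lemma posSemidef_bondHamiltonian {Δ : ℝ} (hΔ : 1 ≤ Δ) : (bondHamiltonian Δ).PosSemidef := by
  rw [bondHamiltonian_eq_smul_vecMulVec hΔ]
  exact (posSemidef_vecMulVec_self_star _).smul (Complex.zero_le_real.mpr (by positivity))

def kinkFactor (Δ : ℝ) (c : ℂ) (y : Fin L) (v : Fin 2) : ℂ :=
  (((1 + ‖c‖ ^ 2 * q Δ ^ (2 * (y.1 + 1))) ^ (-(1 / 2 : ℝ)) : ℝ) : ℂ) *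
    (if v = 0 then 1 else c * (q Δ : ℂ) ^ (y.1 + 1))

lemma kink_eq_prod (Δ : ℝ) (c : ℂ) : kink L Δ c = fun m => ∏ y, kinkFactor Δ c y (m y) := rfl

lemma kinkFactor_zero_ne_zero (Δ : ℝ) (c : ℂ) (y : Fin L) : kinkFactor Δ c y 0 ≠ 0 := by
  have : 0 < 1 + ‖c‖ ^ 2 * q Δ ^ (2 * (y.1 + 1)) :=
    add_pos_of_pos_of_nonneg one_pos (mul_nonneg (sq_nonneg _) ((even_two_mul _).pow_nonneg _))
  simpa [kinkFactor] using (Real.rpow_pos_of_pos this _).ne'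

lemma kink_ne_zero (Δ : ℝ) (c : ℂ) : kink L Δ c ≠ 0 := fun h => by
  have := congrFun h fun _ => 0
  simp only [kink_eq_prod, Pi.zero_apply] at this
  exact Finset.prod_ne_zero_iff.mpr (fun y _ => kinkFactor_zero_ne_zero Δ c y) this

lemma star_qSinglet_dotProduct_kinkFactor (Δ : ℝ) (c : ℂ) {i j : Fin L}
    (hij : (j : ℕ) = i + 1) :
    star (qSinglet Δ) ⬝ᵥ (fun p => kinkFactor Δ c i p.1 * kinkFactor Δ c j p.2) = 0 := by
  simp [dotProduct, Fintype.sum_prod_type, qSinglet, kinkFactor, hij]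
  ring

lemma bondHamiltonian_mulVec_kinkFactor {Δ : ℝ} (hΔ : 1 ≤ Δ) (c : ℂ) {i j : Fin L}
    (hij : (j : ℕ) = i + 1) :
    bondHamiltonian Δ *ᵥ (fun p => kinkFactor Δ c i p.1 * kinkFactor Δ c j p.2) = 0 := by
  rw [bondHamiltonian_eq_smul_vecMulVec hΔ, smul_mulVec, vecMulVec_mulVec,
    star_qSinglet_dotProduct_kinkFactor Δ c hij]
  simp

lemma hBond_mulVec_kink {Δ : ℝ} (hΔ : 1 ≤ Δ) (c : ℂ) {x : ℕ} (hx : x + 1 < L) :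
    hBond L Δ x *ᵥ kink L Δ c = 0 := by
  rw [hBond_eq_bondOp Δ hx, kink_eq_prod]
  exact bondOp_mulVec_prod_eq_zero (by simp [Fin.ext_iff])
    (bondHamiltonian_mulVec_kinkFactor hΔ c rfl)

lemma posSemidef_hBond {Δ : ℝ} (hΔ : 1 ≤ Δ) {x : ℕ} (hx : x + 1 < L) :
    (hBond L Δ x).PosSemidef := by
  rw [hBond_eq_bondOp Δ hx]
  exact posSemidef_bondOp (posSemidef_bondHamiltonian hΔ) _ _

end KinkChain

theorem kink_annihilated_and_ground_state_general
    (L : ℕ) (Δ : ℝ) (hΔ : 1 < Δ) (c : ℂ) :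
    (∀ x : ℕ, x < L - 1 → (hBond L Δ x).mulVec (kink L Δ c) = 0) ∧
    (H0 L Δ).mulVec (kink L Δ c) = 0 ∧
    (H0 L Δ).PosSemidef ∧
    kink L Δ c ≠ 0 ∧
    IsLeast (eigSet (H0 L Δ)) 0 := by
  have hbond : ∀ x : ℕ, x < L - 1 → (hBond L Δ x).mulVec (kink L Δ c) = 0 :=
    fun x hx => hBond_mulVec_kink hΔ.le c (by omega)
  have hH0 : (H0 L Δ).mulVec (kink L Δ c) = 0 := by
    rw [H0, sum_mulVec]
    exact Finset.sum_eq_zero fun x hx => hbond x (Finset.mem_range.mp hx)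
  have hpsd : (H0 L Δ).PosSemidef :=
    posSemidef_sum _ fun x hx => posSemidef_hBond hΔ.le (by simp at hx; omega)
  refine ⟨hbond, hH0, hpsd, kink_ne_zero Δ c, ⟨kink L Δ c, kink_ne_zero Δ c, by simp [hH0]⟩, ?_⟩
  rintro μ ⟨ψ, hψ, hμ⟩
  exact hpsd.nonneg_of_mulVec_eq_smul hψ hμ

/-- for every `c ≠ 0` and every bond `x`, `h_{x,x+1} φ_c = 0`; consequently
`H_0 φ_c = 0`, and since `H_0 ≥ 0` the lowest eigenvalue of `H_0` is `0` and `φ_c` is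
a ground state of `H_0`. -/
theorem kink_annihilated_and_ground_state
    (L : ℕ) (hL : 2 ≤ L) (Δ : ℝ) (hΔ : 1 < Δ) (c : ℂ) (hc : c ≠ 0) :
    (∀ x : ℕ, x < L - 1 → (hBond L Δ x).mulVec (kink L Δ c) = 0) ∧
    (H0 L Δ).mulVec (kink L Δ c) = 0 ∧
    (H0 L Δ).PosSemidef ∧
    kink L Δ c ≠ 0 ∧
    IsLeast (eigSet (H0 L Δ)) 0 :=
  kink_annihilated_and_ground_state_general L Δ hΔ c
end
end

section
/- Let L ≥ 2 be even, x₀ = L/2, B > 0 and v > 0. For t ∈ [0,1/v] let H(t) = H_0 − (1−vt)B S¹_{x₀} − vt B S¹_{x₀+1}, and let E₀(t) denote the lowest eigenvalue of H(t). Then E₀(t) = E₀(1/v − t) for all t ∈ [0, 1/v]. -/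
open Matrix Finset
open scoped ComplexOrder

noncomputable section

/-!
Let `U` be the permutation of the product basis that flips every spin and reflects the chain,
`x ↦ L + 1 - x`. Conjugation by `U` sends `S¹_x ↦ S¹_{L+1-x}` and `Sⁱ_x ↦ -Sⁱ_{L+1-x}` for
`i = 2, 3`, so it maps `h_{x,x+1}` to `h_{L-x,L+1-x}` (site operators on distinct sites commute)
and leaves `H_0` invariant. For even `L` it exchanges the sites `x₀` and `x₀ + 1`, hence
`U H(t) U⁻¹ = H(1/v - t)`, and conjugate matrices have the same eigenvalues. Site operators are
elementary tensors `⊗_y a_y`, on which products and the conjugation by `U` act factorwise.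
-/

namespace Matrix

variable {ι α R : Type*} [Fintype ι] [CommSemiring R]

def piKronecker (a : ι → Matrix α α R) : Matrix (ι → α) (ι → α) R :=
  of fun m n => ∏ i, a i (m i) (n i)

theorem piKronecker_mul [DecidableEq ι] [Fintype α] (a b : ι → Matrix α α R) :
    piKronecker a * piKronecker b = piKronecker (a * b) := by
  ext m n
  simp only [piKronecker, mul_apply, of_apply, Pi.mul_apply, Fintype.prod_sum,
    Finset.prod_mul_distrib]

theorem piKronecker_submatrix_arrowCongr (a : ι → Matrix α α R) (e : ι ≃ ι) (σ : α ≃ α) :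
    (piKronecker a).submatrix (e.arrowCongr σ) (e.arrowCongr σ) =
      piKronecker fun i => (a (e i)).submatrix σ σ := by
  ext m n
  refine (Fintype.prod_equiv e _ _ fun i => ?_).symm
  simp [Equiv.arrowCongr_apply]

end Matrix

theorem siteOp_smul {L : ℕ} (c : ℂ) (A : Matrix (Fin 2) (Fin 2) ℂ) (x : ℕ) :
    siteOp L (c • A) x = c • siteOp L A x := by
  ext m n
  by_cases hx : x < L <;> simp [siteOp, hx, mul_assoc]

theorem siteOp_eq_piKronecker {L : ℕ} (A : Matrix (Fin 2) (Fin 2) ℂ) (x : Fin L) :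
    siteOp L A x = piKronecker (Function.update 1 x A) := by
  ext m n
  simp only [siteOp, dif_pos x.isLt, piKronecker, of_apply,
    ← Finset.mul_prod_erase Finset.univ _ (Finset.mem_univ x), Function.update_self]
  congr 1
  refine Finset.prod_congr rfl fun y hy => ?_
  rw [Function.update_of_ne (Finset.ne_of_mem_erase hy), Pi.one_apply, one_apply]

theorem siteOp_commute {L : ℕ} (A B : Matrix (Fin 2) (Fin 2) ℂ) {x y : ℕ}
    (hx : x < L) (hy : y < L) (hxy : x ≠ y) :
    Commute (siteOp L A x) (siteOp L B y) := by
  have hne : (⟨x, hx⟩ : Fin L) ≠ ⟨y, hy⟩ := by simpa [Fin.ext_iff] using hxy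
  rw [show x = (⟨x, hx⟩ : Fin L).1 from rfl, show y = (⟨y, hy⟩ : Fin L).1 from rfl,
    Commute, SemiconjBy, siteOp_eq_piKronecker, siteOp_eq_piKronecker, piKronecker_mul,
    piKronecker_mul]
  congr 1
  funext z
  simp only [Pi.mul_apply, Function.update_apply]
  split_ifs <;> simp_all

def flipReflect (L : ℕ) : Equiv.Perm (Conf L) :=
  Fin.revPerm.arrowCongr Fin.revPerm

theorem flipReflect_symm (L : ℕ) : (flipReflect L).symm = flipReflect L := by
  simp [flipReflect, Fin.revPerm_symm]

theorem reindexAlgEquiv_flipReflect_siteOp {L : ℕ} (A : Matrix (Fin 2) (Fin 2) ℂ) {x : ℕ}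
    (hx : x < L) :
    reindexAlgEquiv ℂ ℂ (flipReflect L) (siteOp L A x) =
      siteOp L (A.submatrix Fin.rev Fin.rev) (L - 1 - x) := by
  have hrev : (⟨x, hx⟩ : Fin L).rev = ⟨L - 1 - x, by omega⟩ := by ext; simp; omega
  rw [coe_reindexAlgEquiv, reindex_apply, flipReflect_symm, show x = (⟨x, hx⟩ : Fin L).1 from rfl,
    show L - 1 - x = (⟨x, hx⟩ : Fin L).rev.1 by rw [hrev], siteOp_eq_piKronecker,
    siteOp_eq_piKronecker, flipReflect, piKronecker_submatrix_arrowCongr]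
  congr 1
  funext y
  rw [Fin.revPerm_apply]
  by_cases hy : y = (⟨x, hx⟩ : Fin L).rev
  · subst hy
    simp only [Fin.rev_rev, Function.update_self]
    rfl
  · rw [Function.update_of_ne hy, Function.update_of_ne (fun h => hy (by rw [← h, Fin.rev_rev]))]
    exact submatrix_one_equiv Fin.revPerm

theorem S1_submatrix_rev : S1.submatrix Fin.rev Fin.rev = S1 := by
  ext a b; fin_cases a <;> fin_cases b <;> simp [S1]

theorem S2_submatrix_rev : S2.submatrix Fin.rev Fin.rev = -S2 := by
  ext a b; fin_cases a <;> fin_cases b <;> simp [S2] <;> ring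

theorem S3_submatrix_rev : S3.submatrix Fin.rev Fin.rev = -S3 := by
  ext a b; fin_cases a <;> fin_cases b <;> simp [S3] <;> norm_num

theorem reindexAlgEquiv_flipReflect_hBond {L : ℕ} (Δ : ℝ) {x : ℕ} (hx : x + 1 < L) :
    reindexAlgEquiv ℂ ℂ (flipReflect L) (hBond L Δ x) = hBond L Δ (L - 2 - x) := by
  have h₁ : L - 1 - x = L - 2 - x + 1 := by omega
  have h₂ : L - 1 - (x + 1) = L - 2 - x := by omega
  have hcomm (A : Matrix (Fin 2) (Fin 2) ℂ) :
      Commute (siteOp L A (L - 2 - x + 1)) (siteOp L A (L - 2 - x)) :=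
    siteOp_commute A A (by omega) (by omega) (by omega)
  simp only [hBond, map_add, map_sub, map_smul, map_mul, map_one,
    reindexAlgEquiv_flipReflect_siteOp _ hx,
    reindexAlgEquiv_flipReflect_siteOp _ (by omega : x < L),
    S1_submatrix_rev, S2_submatrix_rev, S3_submatrix_rev, h₁, h₂, ← neg_one_smul ℂ S2,
    ← neg_one_smul ℂ S3, siteOp_smul, smul_mul_assoc, mul_smul_comm,
    (hcomm S1).eq, (hcomm S2).eq, (hcomm S3).eq]
  module

theorem reindexAlgEquiv_flipReflect_H0 (L : ℕ) (Δ : ℝ) :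
    reindexAlgEquiv ℂ ℂ (flipReflect L) (H0 L Δ) = H0 L Δ := by
  rw [H0, map_sum, ← Finset.sum_range_reflect]
  refine Finset.sum_congr rfl fun x hx => ?_
  rw [Finset.mem_range] at hx
  rw [reindexAlgEquiv_flipReflect_hBond Δ (by omega)]
  congr 1
  omega

theorem eigSet_subset_eigSet_reindex {m n : Type*} [Fintype m] [DecidableEq m] [Fintype n]
    [DecidableEq n] (e : m ≃ n) (H : Matrix m m ℂ) : eigSet H ⊆ eigSet (reindex e e H) := by
  rintro μ ⟨ψ, hψ, hH⟩
  refine ⟨ψ ∘ e.symm, fun h => hψ (funext fun i => by simpa using congrFun h (e i)), ?_⟩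
  rw [reindex_apply, submatrix_mulVec_equiv, Equiv.symm_symm, Function.comp_assoc,
    e.symm_comp_self, Function.comp_id, hH]
  rfl

theorem eigSet_reindex {m n : Type*} [Fintype m] [DecidableEq m] [Fintype n] [DecidableEq n]
    (e : m ≃ n) (H : Matrix m m ℂ) : eigSet (reindex e e H) = eigSet H := by
  refine subset_antisymm ?_ (eigSet_subset_eigSet_reindex e H)
  calc eigSet (reindex e e H) ⊆ eigSet (reindex e.symm e.symm (reindex e e H)) :=
        eigSet_subset_eigSet_reindex e.symm _
    _ = eigSet H := by rw [← reindex_symm, Equiv.symm_apply_apply]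

def centralFieldHamiltonian (L : ℕ) (Δ a b : ℝ) : Matrix (Conf L) (Conf L) ℂ :=
  H0 L Δ - (a : ℂ) • siteOp L S1 (L / 2 - 1) - (b : ℂ) • siteOp L S1 (L / 2)

theorem reindexAlgEquiv_flipReflect_centralFieldHamiltonian {L : ℕ} (hL : 0 < L)
    (hLeven : Even L) (Δ a b : ℝ) :
    reindexAlgEquiv ℂ ℂ (flipReflect L) (centralFieldHamiltonian L Δ a b) =
      centralFieldHamiltonian L Δ b a := by
  obtain ⟨k, rfl⟩ := hLeven
  have h₁ : k + k - 1 - ((k + k) / 2 - 1) = (k + k) / 2 := by omega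
  have h₂ : k + k - 1 - (k + k) / 2 = (k + k) / 2 - 1 := by omega
  simp only [centralFieldHamiltonian, map_sub, map_smul, reindexAlgEquiv_flipReflect_H0,
    reindexAlgEquiv_flipReflect_siteOp _ (show (k + k) / 2 - 1 < k + k by omega),
    reindexAlgEquiv_flipReflect_siteOp _ (show (k + k) / 2 < k + k by omega),
    S1_submatrix_rev, h₁, h₂]
  abel

theorem eigSet_centralFieldHamiltonian_comm {L : ℕ} (hL : 0 < L) (hLeven : Even L) (Δ a b : ℝ) :
    eigSet (centralFieldHamiltonian L Δ a b) = eigSet (centralFieldHamiltonian L Δ b a) := by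
  rw [← reindexAlgEquiv_flipReflect_centralFieldHamiltonian hL hLeven, coe_reindexAlgEquiv,
    eigSet_reindex]

theorem ground_energy_symmetric_general
    (L : ℕ) (hL : 2 ≤ L) (hLeven : Even L) (Δ : ℝ)
    (B v : ℝ) (hv : 0 < v)
    (E₀ : ℝ → ℝ)
    (hE₀ : ∀ t ∈ Set.Icc (0 : ℝ) (1 / v),
      IsLeast (eigSet (H0 L Δ
        - (((1 - v * t) * B : ℝ) : ℂ) • siteOp L S1 (L / 2 - 1)
        - ((v * t * B : ℝ) : ℂ) • siteOp L S1 (L / 2))) (E₀ t)) :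
    ∀ t ∈ Set.Icc (0 : ℝ) (1 / v), E₀ t = E₀ (1 / v - t) := by
  rintro t ⟨ht₀, ht₁⟩
  have hreflect : v * (1 / v - t) = 1 - v * t := by field_simp
  have h := hE₀ (1 / v - t) ⟨by linarith, by linarith⟩
  rw [hreflect, sub_sub_cancel] at h
  change IsLeast (eigSet (centralFieldHamiltonian L Δ (v * t * B) ((1 - v * t) * B))) _ at h
  rw [eigSet_centralFieldHamiltonian_comm (by omega) hLeven] at h
  exact (hE₀ t ⟨ht₀, ht₁⟩).unique h

/-- for even `L`, `x₀ = L/2`, and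
`H(t) = H_0 − (1−vt)B S¹_{x₀} − vt B S¹_{x₀+1}` (0-based site indices `L/2 - 1, L/2`),
the lowest eigenvalue satisfies the symmetry `E₀(t) = E₀(1/v − t)` on `[0, 1/v]`. -/
theorem ground_energy_symmetric
    (L : ℕ) (hL : 2 ≤ L) (hLeven : Even L) (Δ : ℝ) (hΔ : 1 < Δ)
    (B v : ℝ) (hB : 0 < B) (hv : 0 < v)
    (E₀ : ℝ → ℝ)
    (hE₀ : ∀ t ∈ Set.Icc (0 : ℝ) (1 / v),
      IsLeast (eigSet (H0 L Δ
        - (((1 - v * t) * B : ℝ) : ℂ) • siteOp L S1 (L / 2 - 1)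
        - ((v * t * B : ℝ) : ℂ) • siteOp L S1 (L / 2))) (E₀ t)) :
    ∀ t ∈ Set.Icc (0 : ℝ) (1 / v), E₀ t = E₀ (1 / v - t) :=
  ground_energy_symmetric_general L hL hLeven Δ B v hv E₀ hE₀
end
end
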